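/- There exists a constant C > 0, depending only on N, α, ‖φ‖_∞ and ‖∇φ‖_∞, such that for every x₀ ∈ ℝ^N, every ε > 0, every K > 4 and every u ∈ L²_loc(ℝ^N) ∩ L^{2*_α}(ℝ^N): ∬_{ℝ^N×ℝ^N} u(x)²(φ_ε(x) − φ_ε(y))²/|x−y|^{N+2α} dx dy ≤ C ε^{−2α} ∫_{B(x₀,Kε)} u(x)² dx + C K^{−N} (∫_{ℝ^N∖B(x₀,Kε)} |u|^{2*_α} dx)^{2/2*_α}. -/

import Mathlib

open MeasureTheory Filter Topology Metric Real
open scoped ENNReal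

noncomputable section

/-- Euclidean space `ℝ^N`. -/
abbrev EN (N : ℕ) := EuclideanSpace ℝ (Fin N)

/-- The critical fractional Sobolev exponent `2*_α = 2N/(N-2α)`. -/
def critExp (N : ℕ) (α : ℝ) : ℝ := 2 * N / (N - 2 * α)

/-- The rescaled translated cutoff `φ_ε(x) = φ((x-x₀)/ε)`. -/
def cutoff (N : ℕ) (φ : EN N → ℝ) (x₀ : EN N) (ε : ℝ) (x : EN N) : ℝ :=
  φ (ε⁻¹ • (x - x₀))

namespace CutoffAux


lemma exists_dyadic {x : ℝ} (hx : 1 ≤ x) : ∃ k : ℕ, (2:ℝ) ^ k ≤ x ∧ x < 2 ^ (k + 1) := by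
  have hx0 : 0 < x := lt_of_lt_of_le one_pos hx
  have hl0 : 0 ≤ Int.log 2 x := by
    rw [Int.log_of_one_le_right _ hx]
    exact Int.natCast_nonneg _
  have h1 : ((2:ℕ):ℝ) ^ Int.log 2 x ≤ x := Int.zpow_log_le_self (by norm_num) hx0
  have h2 : x < ((2:ℕ):ℝ) ^ (Int.log 2 x + 1) := Int.lt_zpow_succ_log_self (by norm_num) x
  refine ⟨(Int.log 2 x).toNat, ?_, ?_⟩
  · rw [← zpow_natCast, Int.toNat_of_nonneg hl0]
    exact_mod_cast h1
  · rw [← zpow_natCast]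
    push_cast [Int.toNat_of_nonneg hl0]
    exact_mod_cast h2

def volB (N : ℕ) : ℝ := (volume (ball (0 : EN N) 1)).toReal

lemma volB_pos (N : ℕ) : 0 < volB N :=
  ENNReal.toReal_pos (measure_ball_pos _ _ one_pos).ne' measure_ball_lt_top.ne

lemma volume_closedBall_eq (N : ℕ) (c : EN N) {r : ℝ} (hr : 0 ≤ r) :
    volume (closedBall c r) = ENNReal.ofReal (volB N * r ^ ((N:ℝ))) := by
  have hb : volume (ball (0:EN N) 1) = ENNReal.ofReal (volB N) :=
    (ENNReal.ofReal_toReal measure_ball_lt_top.ne).symm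
  rw [Measure.addHaar_closedBall _ _ hr, finrank_euclideanSpace_fin, hb,
    ← ENNReal.ofReal_mul (by positivity), Real.rpow_natCast, mul_comm]

lemma shell_bound {N : ℕ} (c : EN N) {ρ₁ ρ₂ t : ℝ} (h1 : 0 < ρ₁) (h2 : 0 ≤ ρ₂) (ht : t ≤ 0)
    {S : Set (EN N)} (hSm : MeasurableSet S)
    (hS : ∀ y ∈ S, ρ₁ ≤ ‖y - c‖ ∧ ‖y - c‖ ≤ ρ₂) :
    ∫⁻ y in S, ENNReal.ofReal (‖y - c‖ ^ t) ≤ ENNReal.ofReal (ρ₁ ^ t * (volB N * ρ₂ ^ ((N:ℝ)))) := by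
  calc ∫⁻ y in S, ENNReal.ofReal (‖y - c‖ ^ t)
      ≤ ∫⁻ _ in S, ENNReal.ofReal (ρ₁ ^ t) := by
        refine setLIntegral_mono' hSm fun y hy => ?_
        exact ENNReal.ofReal_le_ofReal (Real.rpow_le_rpow_of_nonpos h1 (hS y hy).1 ht)
    _ = ENNReal.ofReal (ρ₁ ^ t) * volume S := setLIntegral_const _ _
    _ ≤ ENNReal.ofReal (ρ₁ ^ t) * volume (closedBall c ρ₂) := by
        refine mul_le_mul_right (measure_mono fun y hy => ?_) _
        rw [mem_closedBall, dist_eq_norm]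
        exact (hS y hy).2
    _ = ENNReal.ofReal (ρ₁ ^ t * (volB N * ρ₂ ^ ((N:ℝ)))) := by
        rw [volume_closedBall_eq N c h2, ← ENNReal.ofReal_mul (by positivity)]

lemma tsum_geom_ofReal {D q : ℝ} (hq0 : 0 ≤ q) (hq1 : q < 1) :
    ∑' k : ℕ, ENNReal.ofReal (D * q ^ k) ≤ ENNReal.ofReal (D * (1 - q)⁻¹) := by
  rcases le_or_gt D 0 with hD | hD
  · have : ∀ k : ℕ, ENNReal.ofReal (D * q ^ k) = 0 := fun k =>
      ENNReal.ofReal_eq_zero.2 (mul_nonpos_of_nonpos_of_nonneg hD (by positivity))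
    simp [this]
  · rw [← ENNReal.ofReal_tsum_of_nonneg (fun n => by positivity)
      ((summable_geometric_of_lt_one hq0 hq1).mul_left D), tsum_mul_left,
      tsum_geometric_of_lt_one hq0 hq1]

lemma two_shell_alg {v r t ν a b : ℝ} (hr : 0 < r) :
    ((2:ℝ) ^ a * r) ^ t * (v * ((2:ℝ) ^ b * r) ^ ν) = v * (2:ℝ) ^ (a * t + b * ν) * r ^ (t + ν) := by
  rw [Real.mul_rpow (Real.rpow_nonneg two_pos.le _) hr.le,
      Real.mul_rpow (Real.rpow_nonneg two_pos.le _) hr.le,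
      ← Real.rpow_mul two_pos.le, ← Real.rpow_mul two_pos.le,
      Real.rpow_add two_pos, Real.rpow_add hr]
  ring

lemma rpow_nat_pow_eq (c : ℝ) (k : ℕ) :
    ((2:ℝ) ^ c) ^ k = (2:ℝ) ^ (c * (k:ℝ)) := by
  rw [← Real.rpow_natCast ((2:ℝ) ^ c) k, ← Real.rpow_mul two_pos.le]

lemma far_bound {N : ℕ} {s : ℝ} (hs : (N:ℝ) < s) :
    ∃ C : ℝ, 0 < C ∧ ∀ (c : EN N) (r : ℝ), 0 < r →
      ∫⁻ y in (ball c r)ᶜ, ENNReal.ofReal (‖y - c‖ ^ (-s)) ≤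
        ENNReal.ofReal (C * r ^ ((N:ℝ) - s)) := by
  set q : ℝ := 2 ^ ((N:ℝ) - s) with hqdef
  have hq0 : 0 < q := Real.rpow_pos_of_pos two_pos _
  have hq1 : q < 1 := Real.rpow_lt_one_of_one_lt_of_neg one_lt_two (by linarith)
  refine ⟨volB N * 2 ^ ((N:ℝ)) * (1 - q)⁻¹,
    mul_pos (mul_pos (volB_pos N) (Real.rpow_pos_of_pos two_pos _)) (inv_pos.2 (by linarith)),
    fun c r hr => ?_⟩
  set A : ℕ → Set (EN N) := fun k =>
    ball c ((2:ℝ) ^ ((k:ℝ) + 1) * r) \ ball c ((2:ℝ) ^ ((k:ℝ)) * r) with hA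
  have cover : (ball c r)ᶜ ⊆ ⋃ k : ℕ, A k := by
    intro y hy
    have hy' : r ≤ ‖y - c‖ := by
      simp only [Set.mem_compl_iff, mem_ball, dist_eq_norm, not_lt] at hy
      exact hy
    obtain ⟨k, hk1, hk2⟩ := exists_dyadic ((one_le_div hr).2 hy')
    rw [div_lt_iff₀ hr] at hk2
    rw [le_div_iff₀ hr] at hk1
    refine Set.mem_iUnion.2 ⟨k, ?_, ?_⟩
    · rw [mem_ball, dist_eq_norm]
      calc ‖y - c‖ < 2 ^ (k + 1) * r := hk2
        _ = (2:ℝ) ^ ((k:ℝ) + 1) * r := by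
            rw [← Real.rpow_natCast 2 (k+1)]; push_cast; ring_nf
    · rw [mem_ball, dist_eq_norm, not_lt, Real.rpow_natCast]
      exact hk1
  have shell : ∀ k : ℕ, ∫⁻ y in A k, ENNReal.ofReal (‖y - c‖ ^ (-s)) ≤
      ENNReal.ofReal ((volB N * 2 ^ ((N:ℝ)) * r ^ ((N:ℝ) - s)) * q ^ k) := by
    intro k
    have hb := shell_bound (N := N) c (ρ₁ := (2:ℝ) ^ ((k:ℝ)) * r) (ρ₂ := (2:ℝ) ^ ((k:ℝ) + 1) * r)
      (by positivity) (by positivity) (neg_nonpos.2 (le_of_lt (lt_of_le_of_lt (Nat.cast_nonneg N) hs)))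
      ((measurableSet_ball).diff measurableSet_ball)
      (fun y hy => by
        obtain ⟨hy1, hy2⟩ := hy
        rw [mem_ball, dist_eq_norm] at hy1 hy2
        exact ⟨not_lt.1 hy2, le_of_lt hy1⟩)
    refine hb.trans (le_of_eq ?_)
    congr 1
    rw [two_shell_alg hr, hqdef, rpow_nat_pow_eq,
      show (k:ℝ) * (-s) + ((k:ℝ) + 1) * (N:ℝ) = (N:ℝ) + (((N:ℝ) - s) * (k:ℝ)) by ring,
      Real.rpow_add two_pos, show -s + (N:ℝ) = (N:ℝ) - s by ring]
    ring
  calc ∫⁻ y in (ball c r)ᶜ, ENNReal.ofReal (‖y - c‖ ^ (-s))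
      ≤ ∫⁻ y in ⋃ k : ℕ, A k, ENNReal.ofReal (‖y - c‖ ^ (-s)) := lintegral_mono_set cover
    _ ≤ ∑' k : ℕ, ∫⁻ y in A k, ENNReal.ofReal (‖y - c‖ ^ (-s)) := lintegral_iUnion_le _ _
    _ ≤ ∑' k : ℕ, ENNReal.ofReal ((volB N * 2 ^ ((N:ℝ)) * r ^ ((N:ℝ) - s)) * q ^ k) :=
        ENNReal.tsum_le_tsum shell
    _ ≤ ENNReal.ofReal ((volB N * 2 ^ ((N:ℝ)) * r ^ ((N:ℝ) - s)) * (1 - q)⁻¹) :=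
        tsum_geom_ofReal hq0.le hq1
    _ = ENNReal.ofReal (volB N * 2 ^ ((N:ℝ)) * (1 - q)⁻¹ * r ^ ((N:ℝ) - s)) := by ring_nf

lemma near_bound {N : ℕ} {a : ℝ} (ha : -(N:ℝ) < a) (ha0 : a < 0) :
    ∃ C : ℝ, 0 < C ∧ ∀ (c : EN N) (r : ℝ), 0 < r →
      ∫⁻ y in ball c r, ENNReal.ofReal (‖y - c‖ ^ a) ≤
        ENNReal.ofReal (C * r ^ ((N:ℝ) + a)) := by
  set q : ℝ := 2 ^ (-((N:ℝ) + a)) with hqdef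
  have hq0 : 0 < q := Real.rpow_pos_of_pos two_pos _
  have hq1 : q < 1 := Real.rpow_lt_one_of_one_lt_of_neg one_lt_two (by linarith)
  refine ⟨volB N * 2 ^ (-a) * (1 - q)⁻¹,
    mul_pos (mul_pos (volB_pos N) (Real.rpow_pos_of_pos two_pos _)) (inv_pos.2 (by linarith)),
    fun c r hr => ?_⟩
  set A : ℕ → Set (EN N) := fun k =>
    closedBall c ((2:ℝ) ^ (-(k:ℝ)) * r) \ closedBall c ((2:ℝ) ^ (-((k:ℝ) + 1)) * r) with hA
  have cover : ball c r ⊆ {c} ∪ ⋃ k : ℕ, A k := by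
    intro y hy
    rw [mem_ball, dist_eq_norm] at hy
    rcases eq_or_ne y c with h | h
    · exact Set.mem_union_left _ (by simp [h])
    have hd : 0 < ‖y - c‖ := by
      rw [norm_pos_iff]; exact sub_ne_zero_of_ne h
    have h1 : 1 ≤ r / ‖y - c‖ := (one_le_div hd).2 hy.le
    obtain ⟨k, hk1, hk2⟩ := exists_dyadic h1
    rw [le_div_iff₀ hd] at hk1
    rw [div_lt_iff₀ hd] at hk2
    refine Set.mem_union_right _ (Set.mem_iUnion.2 ⟨k, ?_, ?_⟩)
    · rw [mem_closedBall, dist_eq_norm]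
      rw [Real.rpow_neg two_pos.le, Real.rpow_natCast, inv_mul_eq_div, le_div_iff₀ (by positivity)]
      linarith [hk1]
    · rw [mem_closedBall, dist_eq_norm, not_le,
        show -((k:ℝ) + 1) = -(((k+1 : ℕ):ℝ)) by push_cast; ring,
        Real.rpow_neg two_pos.le, Real.rpow_natCast, inv_mul_eq_div, div_lt_iff₀ (by positivity)]
      linarith [hk2]
  have shell : ∀ k : ℕ, ∫⁻ y in A k, ENNReal.ofReal (‖y - c‖ ^ a) ≤
      ENNReal.ofReal ((volB N * 2 ^ (-a) * r ^ ((N:ℝ) + a)) * q ^ k) := by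
    intro k
    have hb := shell_bound (N := N) c (ρ₁ := (2:ℝ) ^ (-((k:ℝ) + 1)) * r)
      (ρ₂ := (2:ℝ) ^ (-(k:ℝ)) * r)
      (by positivity) (by positivity) ha0.le
      ((measurableSet_closedBall).diff measurableSet_closedBall)
      (fun y hy => by
        obtain ⟨hy1, hy2⟩ := hy
        rw [mem_closedBall, dist_eq_norm] at hy1 hy2
        exact ⟨(not_le.1 hy2).le, hy1⟩)
    refine hb.trans (le_of_eq ?_)
    congr 1
    rw [two_shell_alg hr, hqdef, rpow_nat_pow_eq,
      show (-((k:ℝ) + 1)) * a + (-(k:ℝ)) * (N:ℝ) = -a + (-((N:ℝ) + a)) * (k:ℝ) by ring,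
      Real.rpow_add two_pos, show a + (N:ℝ) = (N:ℝ) + a by ring]
    ring
  have hsing : ∫⁻ y in {c}, ENNReal.ofReal (‖y - c‖ ^ a) = 0 := by
    rw [lintegral_singleton]
    simp [Real.zero_rpow ha0.ne]
  calc ∫⁻ y in ball c r, ENNReal.ofReal (‖y - c‖ ^ a)
      ≤ ∫⁻ y in {c} ∪ ⋃ k : ℕ, A k, ENNReal.ofReal (‖y - c‖ ^ a) := lintegral_mono_set cover
    _ ≤ (∫⁻ y in {c}, ENNReal.ofReal (‖y - c‖ ^ a))
        + ∫⁻ y in ⋃ k : ℕ, A k, ENNReal.ofReal (‖y - c‖ ^ a) := lintegral_union_le _ _ _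
    _ ≤ 0 + ∑' k : ℕ, ∫⁻ y in A k, ENNReal.ofReal (‖y - c‖ ^ a) := by
        rw [hsing]; exact add_le_add le_rfl (lintegral_iUnion_le _ _)
    _ ≤ ∑' k : ℕ, ENNReal.ofReal ((volB N * 2 ^ (-a) * r ^ ((N:ℝ) + a)) * q ^ k) := by
        rw [zero_add]; exact ENNReal.tsum_le_tsum shell
    _ ≤ ENNReal.ofReal ((volB N * 2 ^ (-a) * r ^ ((N:ℝ) + a)) * (1 - q)⁻¹) :=
        tsum_geom_ofReal hq0.le hq1
    _ = ENNReal.ofReal (volB N * 2 ^ (-a) * (1 - q)⁻¹ * r ^ ((N:ℝ) + a)) := by ring_nf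


end CutoffAux

set_option maxHeartbeats 2000000 in
/-- Global estimate for the Gagliardo-type double integral of
`u(x)²(φ_ε(x)-φ_ε(y))²`, with constant depending only on `N`, `α`, `‖φ‖_∞`, `‖∇φ‖_∞`. -/
theorem cutoff_gagliardo_global_estimate
    (N : ℕ) (hN : 2 ≤ N) (α : ℝ) (hα : α ∈ Set.Ioo (0:ℝ) 1)
    (φ : EN N → ℝ) (hφ_smooth : ContDiff ℝ (⊤ : ℕ∞) φ) (hφ_supp : HasCompactSupport φ)
    (hφ_01 : ∀ x : EN N, 0 ≤ φ x ∧ φ x ≤ 1)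
    (hφ_one : ∀ x ∈ ball (0 : EN N) 1, φ x = 1)
    (hφ_zero : ∀ x ∉ ball (0 : EN N) 2, φ x = 0) :
    ∃ C : ℝ, 0 < C ∧
      ∀ (x₀ : EN N) (ε K : ℝ) (u : EN N → ℝ), 0 < ε → 4 < K →
        LocallyIntegrable (fun x => (u x) ^ 2) (volume : Measure (EN N)) →
        MemLp u (ENNReal.ofReal (critExp N α)) (volume : Measure (EN N)) →
        (∫⁻ p : EN N × EN N,
            ENNReal.ofReal ((u p.1) ^ 2 *
              (cutoff N φ x₀ ε p.1 - cutoff N φ x₀ ε p.2) ^ 2 / ‖p.1 - p.2‖ ^ ((N : ℝ) + 2 * α)))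
          ≤ ENNReal.ofReal (C * ε ^ (-(2 * α)) * ∫ x in ball x₀ (K * ε), (u x) ^ 2)
            + ENNReal.ofReal (C * K ^ (-(N : ℝ)) *
                (∫ x in (ball x₀ (K * ε))ᶜ, |u x| ^ critExp N α) ^ (2 / critExp N α)) := by
  obtain ⟨hα0, hα1⟩ := hα
  have hN2 : (2:ℝ) ≤ (N:ℝ) := by exact_mod_cast hN
  have hN0 : (0:ℝ) < N := by linarith
  have hNne : (N:ℝ) ≠ 0 := by linarith
  have hNα : 0 < (N:ℝ) - 2*α := by linarith
  set s : ℝ := (N:ℝ) + 2*α with hs_def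
  have hs : (N:ℝ) < s := by rw [hs_def]; linarith
  have hs0 : (0:ℝ) < s := by linarith
  obtain ⟨Lip, hLip⟩ :=
    ContDiff.lipschitzWith_of_hasCompactSupport hφ_supp hφ_smooth (by simp)
  set L : ℝ := (Lip : ℝ) with hL_def
  have hL0 : 0 ≤ L := by rw [hL_def]; exact Lip.coe_nonneg
  have hn1 : -(N:ℝ) < 2 - s := by rw [hs_def]; linarith
  have hn2 : 2 - s < 0 := by rw [hs_def]; linarith
  obtain ⟨Cn, hCn0, hCn⟩ := CutoffAux.near_bound (N := N) hn1 hn2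
  obtain ⟨Cf, hCf0, hCf⟩ := CutoffAux.far_bound (N := N) hs
  set qe : ℝ := (N:ℝ) / (2*α) with hqe_def
  have hqe1 : 1 < qe := by rw [hqe_def, lt_div_iff₀ (by linarith)]; linarith
  have hqe0 : 0 < qe := by linarith
  set pe : ℝ := (N:ℝ) / ((N:ℝ) - 2*α) with hpe_def
  have hpe1 : 1 < pe := by rw [hpe_def, lt_div_iff₀ hNα]; linarith
  have hpe0 : 0 < pe := by linarith
  have hpq : Real.HolderConjugate pe qe := by
    refine Real.holderConjugate_iff.mpr ⟨hpe1, ?_⟩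
    rw [hpe_def, hqe_def]
    field_simp
    ring
  have hsq : (N:ℝ) < s * qe := lt_of_lt_of_le hs (le_mul_of_one_le_right hs0.le hqe1.le)
  obtain ⟨Cf2, hCf20, hCf2⟩ := CutoffAux.far_bound (N := N) hsq
  set D : ℝ := CutoffAux.volB N * 2 ^ ((N:ℝ)) * 2 ^ s with hD_def
  have hvB := CutoffAux.volB_pos N
  have hD0 : 0 < D := by
    rw [hD_def]
    exact mul_pos (mul_pos hvB (Real.rpow_pos_of_pos two_pos _)) (Real.rpow_pos_of_pos two_pos _)
  set C₁ : ℝ := L^2 * Cn + Cf with hC₁_def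
  have hC₁0 : 0 < C₁ := add_pos_of_nonneg_of_pos (mul_nonneg (by positivity) hCn0.le) hCf0
  set C₅ : ℝ := D * Cf2 ^ (1/qe) with hC₅_def
  have hC₅0 : 0 < C₅ := mul_pos hD0 (Real.rpow_pos_of_pos hCf20 _)
  have hcrit0 : 0 < critExp N α := div_pos (by linarith) hNα
  refine ⟨max C₁ C₅, lt_max_of_lt_left hC₁0, ?_⟩
  intro x₀ ε K u hε hK hloc hmem
  have hK0 : (0:ℝ) < K := by linarith
  have hKε : 0 < K * ε := by positivity
  set ψ : EN N → ℝ := fun x => φ (ε⁻¹ • (x - x₀)) with hψ_def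
  have hcut : ∀ x, cutoff N φ x₀ ε x = ψ x := fun x => rfl
  have hψc : Continuous ψ := hφ_smooth.continuous.comp
    ((continuous_id.sub continuous_const).const_smul ε⁻¹)
  have hψm : Measurable ψ := hψc.measurable
  have hψ01 : ∀ x, 0 ≤ ψ x ∧ ψ x ≤ 1 := fun x => hφ_01 _
  have hψdiff : ∀ x y, |ψ x - ψ y| ≤ 1 := by
    intro x y
    obtain ⟨h1, h2⟩ := hψ01 x
    obtain ⟨h3, h4⟩ := hψ01 y
    rw [abs_le]
    constructor <;> linarith
  have hψlip : ∀ x y, |ψ x - ψ y| ≤ L / ε * ‖x - y‖ := by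
    intro x y
    have h := hLip.dist_le_mul (ε⁻¹ • (x - x₀)) (ε⁻¹ • (y - x₀))
    have heq : ε⁻¹ • (x - x₀) - ε⁻¹ • (y - x₀) = ε⁻¹ • (x - y) := by
      rw [← smul_sub]
      congr 1
      abel
    rw [Real.dist_eq, dist_eq_norm, heq, norm_smul, norm_inv, Real.norm_eq_abs,
      abs_of_pos hε, ← hL_def] at h
    calc |ψ x - ψ y| ≤ L * (ε⁻¹ * ‖x - y‖) := h
      _ = L / ε * ‖x - y‖ := by ring
  have hψvan : ∀ x, 2 * ε ≤ ‖x - x₀‖ → ψ x = 0 := by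
    intro x hx
    refine hφ_zero _ ?_
    rw [mem_ball, dist_zero_right, norm_smul, norm_inv, Real.norm_eq_abs, abs_of_pos hε, not_lt]
    calc (2:ℝ) = ε⁻¹ * (2*ε) := by field_simp
      _ ≤ ε⁻¹ * ‖x - x₀‖ := mul_le_mul_of_nonneg_left hx (inv_nonneg.2 hε.le)
  set J : EN N → ℝ≥0∞ := fun x => ∫⁻ y, ENNReal.ofReal ((ψ x - ψ y)^2 / ‖x - y‖ ^ s) with hJ_def
  -- Lemma I
  have hJ1 : ∀ x : EN N, J x ≤ ENNReal.ofReal (C₁ * ε ^ (-(2*α))) := by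
    intro x
    have hnear : ∫⁻ y in ball x ε, ENNReal.ofReal ((ψ x - ψ y)^2 / ‖x - y‖ ^ s)
        ≤ ENNReal.ofReal (L^2 * Cn * ε ^ (-(2*α))) := by
      calc ∫⁻ y in ball x ε, ENNReal.ofReal ((ψ x - ψ y)^2 / ‖x - y‖ ^ s)
          ≤ ∫⁻ y in ball x ε, ENNReal.ofReal ((L/ε)^2 * ‖y - x‖ ^ (2 - s)) := by
            refine setLIntegral_mono' measurableSet_ball fun y _ => ENNReal.ofReal_le_ofReal ?_
            rcases eq_or_ne y x with rfl | hne
            · simp only [sub_self, norm_zero]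
              rw [zero_pow two_ne_zero, zero_div, Real.zero_rpow hn2.ne, mul_zero]
            · have hd : 0 < ‖x - y‖ := by
                rw [norm_pos_iff, sub_ne_zero]
                exact fun hxy => hne hxy.symm
              have hb : (ψ x - ψ y)^2 ≤ (L/ε * ‖x - y‖)^2 := by
                rw [← sq_abs (ψ x - ψ y)]
                exact pow_le_pow_left₀ (abs_nonneg _) (hψlip x y) 2
              calc (ψ x - ψ y)^2 / ‖x - y‖ ^ s ≤ (L/ε * ‖x - y‖)^2 / ‖x - y‖ ^ s := by
                    exact div_le_div_of_nonneg_right hb (by positivity)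
                _ = (L/ε)^2 * ‖y - x‖ ^ (2 - s) := by
                    rw [norm_sub_rev y x, Real.rpow_sub hd, mul_pow,
                      show ‖x - y‖ ^ (2:ℝ) = ‖x - y‖ ^ (2:ℕ) from by
                        rw [← Real.rpow_natCast ‖x - y‖ 2]; norm_num]
                    ring
        _ = ENNReal.ofReal ((L/ε)^2) * ∫⁻ y in ball x ε, ENNReal.ofReal (‖y - x‖ ^ (2 - s)) := by
            simp_rw [ENNReal.ofReal_mul (by positivity : (0:ℝ) ≤ (L/ε)^2)]
            rw [lintegral_const_mul' _ _ ENNReal.ofReal_ne_top]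
        _ ≤ ENNReal.ofReal ((L/ε)^2) * ENNReal.ofReal (Cn * ε ^ ((N:ℝ) + (2 - s))) :=
            mul_le_mul_right (hCn x ε hε) _
        _ = ENNReal.ofReal ((L/ε)^2 * (Cn * ε ^ ((N:ℝ) + (2 - s)))) :=
            (ENNReal.ofReal_mul (by positivity)).symm
        _ = ENNReal.ofReal (L^2 * Cn * ε ^ (-(2*α))) := by
            congr 1
            rw [show (N:ℝ) + (2 - s) = 2 + -(2*α) from by rw [hs_def]; ring,
              Real.rpow_add hε,
              show ε ^ (2:ℝ) = ε ^ (2:ℕ) from by rw [← Real.rpow_natCast ε 2]; norm_num,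
              div_pow]
            field_simp
    have hfar : ∫⁻ y in (ball x ε)ᶜ, ENNReal.ofReal ((ψ x - ψ y)^2 / ‖x - y‖ ^ s)
        ≤ ENNReal.ofReal (Cf * ε ^ (-(2*α))) := by
      calc ∫⁻ y in (ball x ε)ᶜ, ENNReal.ofReal ((ψ x - ψ y)^2 / ‖x - y‖ ^ s)
          ≤ ∫⁻ y in (ball x ε)ᶜ, ENNReal.ofReal (‖y - x‖ ^ (-s)) := by
            refine setLIntegral_mono' measurableSet_ball.compl fun y hy =>
              ENNReal.ofReal_le_ofReal ?_
            have hd : ε ≤ ‖y - x‖ := by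
              simpa [mem_ball, dist_eq_norm, not_lt] using hy
            have hd0 : 0 < ‖x - y‖ := by rw [norm_sub_rev]; linarith
            have hb : (ψ x - ψ y)^2 ≤ 1 := by
              rw [← sq_abs]
              exact pow_le_one₀ (abs_nonneg _) (hψdiff x y)
            calc (ψ x - ψ y)^2 / ‖x - y‖ ^ s ≤ 1 / ‖x - y‖ ^ s :=
                  div_le_div_of_nonneg_right hb (by positivity)
              _ = ‖y - x‖ ^ (-s) := by
                  rw [norm_sub_rev x y, Real.rpow_neg (norm_nonneg _), one_div]
        _ ≤ ENNReal.ofReal (Cf * ε ^ ((N:ℝ) - s)) := hCf x ε hε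
        _ = ENNReal.ofReal (Cf * ε ^ (-(2*α))) := by
            rw [show (N:ℝ) - s = -(2*α) from by rw [hs_def]; ring]
    calc J x = (∫⁻ y in ball x ε, ENNReal.ofReal ((ψ x - ψ y)^2 / ‖x - y‖ ^ s))
          + ∫⁻ y in (ball x ε)ᶜ, ENNReal.ofReal ((ψ x - ψ y)^2 / ‖x - y‖ ^ s) :=
        (lintegral_add_compl _ measurableSet_ball).symm
      _ ≤ ENNReal.ofReal (L^2 * Cn * ε ^ (-(2*α))) + ENNReal.ofReal (Cf * ε ^ (-(2*α))) :=
        add_le_add hnear hfar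
      _ = ENNReal.ofReal (C₁ * ε ^ (-(2*α))) := by
        rw [← ENNReal.ofReal_add (by positivity) (by positivity), hC₁_def]
        ring_nf
  -- Lemma II
  have hJ2 : ∀ x ∈ (ball x₀ (K*ε))ᶜ, J x ≤ ENNReal.ofReal (D * ε ^ ((N:ℝ)) * ‖x - x₀‖ ^ (-s)) := by
    intro x hx
    have hR : K * ε ≤ ‖x - x₀‖ := by
      simpa [mem_ball, dist_eq_norm, not_lt] using hx
    have hR0 : 0 < ‖x - x₀‖ := lt_of_lt_of_le hKε hR
    have h4ε : 4 * ε ≤ ‖x - x₀‖ := le_trans (by nlinarith) hR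
    have hψx : ψ x = 0 := hψvan x (by linarith)
    have hb1 : ∫⁻ y in ball x₀ (2*ε), ENNReal.ofReal ((ψ x - ψ y)^2 / ‖x - y‖ ^ s)
        ≤ ∫⁻ _ in ball x₀ (2*ε), ENNReal.ofReal ((‖x - x₀‖/2) ^ (-s)) := by
      refine setLIntegral_mono' measurableSet_ball fun y hy => ENNReal.ofReal_le_ofReal ?_
      have hy2 : ‖y - x₀‖ < 2*ε := by simpa [mem_ball, dist_eq_norm] using hy
      have htri : ‖x - x₀‖ ≤ ‖x - y‖ + ‖y - x₀‖ := by
        calc ‖x - x₀‖ = ‖(x - y) + (y - x₀)‖ := by congr 1; abel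
          _ ≤ ‖x - y‖ + ‖y - x₀‖ := norm_add_le _ _
      have hd : ‖x - x₀‖/2 ≤ ‖x - y‖ := by linarith
      have hd0 : (0:ℝ) < ‖x - x₀‖/2 := by positivity
      have hbsq : (ψ x - ψ y)^2 ≤ 1 := by
        rw [← sq_abs]
        exact pow_le_one₀ (abs_nonneg _) (hψdiff x y)
      calc (ψ x - ψ y)^2 / ‖x - y‖ ^ s ≤ 1 / ‖x - y‖ ^ s :=
            div_le_div_of_nonneg_right hbsq (by positivity)
        _ = ‖x - y‖ ^ (-s) := by rw [Real.rpow_neg (norm_nonneg _), one_div]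
        _ ≤ (‖x - x₀‖/2) ^ (-s) :=
            Real.rpow_le_rpow_of_nonpos hd0 hd (neg_nonpos.2 hs0.le)
    have hb2 : ∫⁻ y in (ball x₀ (2*ε))ᶜ, ENNReal.ofReal ((ψ x - ψ y)^2 / ‖x - y‖ ^ s) ≤ 0 := by
      have h := setLIntegral_mono' (μ := volume) (f := fun y : EN N =>
          ENNReal.ofReal ((ψ x - ψ y)^2 / ‖x - y‖ ^ s)) (g := fun _ => 0)
        measurableSet_ball.compl (fun y hy => by
          have hyv : ψ y = 0 := hψvan y (by simpa [mem_ball, dist_eq_norm, not_lt] using hy)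
          simp [hψx, hyv])
      simpa using h
    calc J x = (∫⁻ y in ball x₀ (2*ε), ENNReal.ofReal ((ψ x - ψ y)^2 / ‖x - y‖ ^ s))
          + ∫⁻ y in (ball x₀ (2*ε))ᶜ, ENNReal.ofReal ((ψ x - ψ y)^2 / ‖x - y‖ ^ s) :=
        (lintegral_add_compl _ measurableSet_ball).symm
      _ ≤ (∫⁻ _ in ball x₀ (2*ε), ENNReal.ofReal ((‖x - x₀‖/2) ^ (-s))) + 0 := add_le_add hb1 hb2
      _ = ENNReal.ofReal ((‖x - x₀‖/2) ^ (-s)) * volume (ball x₀ (2*ε)) := by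
          rw [add_zero, setLIntegral_const]
      _ ≤ ENNReal.ofReal ((‖x - x₀‖/2) ^ (-s)) * volume (closedBall x₀ (2*ε)) :=
          mul_le_mul_right (measure_mono ball_subset_closedBall) _
      _ = ENNReal.ofReal ((‖x - x₀‖/2) ^ (-s) * (CutoffAux.volB N * (2*ε) ^ ((N:ℝ)))) := by
          rw [CutoffAux.volume_closedBall_eq N x₀ (by positivity),
            ← ENNReal.ofReal_mul (by positivity)]
      _ = ENNReal.ofReal (D * ε ^ ((N:ℝ)) * ‖x - x₀‖ ^ (-s)) := by
          congr 1
          rw [hD_def, div_eq_mul_inv, Real.mul_rpow hR0.le (by positivity),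
            Real.inv_rpow two_pos.le, ← Real.rpow_neg two_pos.le, neg_neg,
            Real.mul_rpow two_pos.le hε.le]
          ring
  -- measurability
  have hum : AEMeasurable u (volume : Measure (EN N)) := hmem.aestronglyMeasurable.aemeasurable
  have hGm : Measurable (fun pr : EN N × EN N =>
      ENNReal.ofReal ((ψ pr.1 - ψ pr.2)^2 / ‖pr.1 - pr.2‖ ^ s)) := by
    apply Measurable.ennreal_ofReal
    apply Measurable.div
    · exact (((hψc.comp continuous_fst).sub (hψc.comp continuous_snd)).pow 2).measurable
    · exact (continuous_fst.sub continuous_snd).norm.measurable.pow_const s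
  have hfm : AEMeasurable (fun pr : EN N × EN N => ENNReal.ofReal (u pr.1 ^ 2))
      ((volume : Measure (EN N)).prod (volume : Measure (EN N))) := by
    exact ENNReal.measurable_ofReal.comp_aemeasurable
      ((hum.comp_quasiMeasurePreserving Measure.quasiMeasurePreserving_fst).pow_const 2)
  -- Tonelli
  have main_eq : (∫⁻ p : EN N × EN N,
        ENNReal.ofReal ((u p.1) ^ 2 * (ψ p.1 - ψ p.2) ^ 2 / ‖p.1 - p.2‖ ^ s))
      = ∫⁻ x, ENNReal.ofReal (u x ^ 2) * J x := by
    have h1 : ∀ p : EN N × EN N,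
        ENNReal.ofReal ((u p.1) ^ 2 * (ψ p.1 - ψ p.2) ^ 2 / ‖p.1 - p.2‖ ^ s)
        = ENNReal.ofReal ((u p.1) ^ 2) * ENNReal.ofReal ((ψ p.1 - ψ p.2) ^ 2 / ‖p.1 - p.2‖ ^ s) :=
      fun p => by rw [mul_div_assoc, ENNReal.ofReal_mul (sq_nonneg _)]
    rw [lintegral_congr h1, Measure.volume_eq_prod, lintegral_prod (fun p : EN N × EN N => ENNReal.ofReal (u p.1 ^ 2) *
      ENNReal.ofReal ((ψ p.1 - ψ p.2) ^ 2 / ‖p.1 - p.2‖ ^ s)) (hfm.mul hGm.aemeasurable)]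
    refine lintegral_congr fun x => ?_
    exact lintegral_const_mul' (ENNReal.ofReal (u x ^ 2))
      (fun y => ENNReal.ofReal ((ψ x - ψ y) ^ 2 / ‖x - y‖ ^ s)) ENNReal.ofReal_ne_top
  -- integrability facts
  have hInt1 : IntegrableOn (fun x => u x ^ 2) (ball x₀ (K*ε)) volume :=
    (hloc.integrableOn_isCompact (isCompact_closedBall x₀ (K*ε))).mono_set ball_subset_closedBall
  have hInt2 : Integrable (fun x => |u x| ^ critExp N α) volume := by
    have h := hmem.integrable_norm_rpow
      (by simp [ENNReal.ofReal_eq_zero, not_le, hcrit0]) ENNReal.ofReal_ne_top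
    simpa [ENNReal.toReal_ofReal hcrit0.le, Real.norm_eq_abs] using h
  have hIball : 0 ≤ ∫ x in ball x₀ (K*ε), u x ^ 2 := integral_nonneg fun x => sq_nonneg _
  have hIout : 0 ≤ ∫ x in (ball x₀ (K*ε))ᶜ, |u x| ^ critExp N α :=
    integral_nonneg fun x => by positivity
  -- term 1
  have hT1 : ∫⁻ x in ball x₀ (K*ε), ENNReal.ofReal (u x ^ 2) * J x
      ≤ ENNReal.ofReal (max C₁ C₅ * ε ^ (-(2*α)) * ∫ x in ball x₀ (K*ε), u x ^ 2) := by
    calc ∫⁻ x in ball x₀ (K*ε), ENNReal.ofReal (u x ^ 2) * J x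
        ≤ ∫⁻ x in ball x₀ (K*ε), ENNReal.ofReal (u x ^ 2) * ENNReal.ofReal (C₁ * ε ^ (-(2*α))) :=
          setLIntegral_mono' measurableSet_ball fun x _ => mul_le_mul_right (hJ1 x) _
      _ = (∫⁻ x in ball x₀ (K*ε), ENNReal.ofReal (u x ^ 2)) * ENNReal.ofReal (C₁ * ε ^ (-(2*α))) :=
          lintegral_mul_const' _ _ ENNReal.ofReal_ne_top
      _ = ENNReal.ofReal (∫ x in ball x₀ (K*ε), u x ^ 2) * ENNReal.ofReal (C₁ * ε ^ (-(2*α))) := by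
          rw [ofReal_integral_eq_lintegral_ofReal hInt1
            (Filter.Eventually.of_forall fun x => sq_nonneg _)]
      _ ≤ ENNReal.ofReal (max C₁ C₅ * ε ^ (-(2*α)) * ∫ x in ball x₀ (K*ε), u x ^ 2) := by
          rw [← ENNReal.ofReal_mul hIball]
          refine ENNReal.ofReal_le_ofReal ?_
          have hcomm : (∫ x in ball x₀ (K*ε), u x ^ 2) * (C₁ * ε ^ (-(2*α)))
              = C₁ * ε ^ (-(2*α)) * ∫ x in ball x₀ (K*ε), u x ^ 2 := by ring
          rw [hcomm]
          exact mul_le_mul_of_nonneg_right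
            (mul_le_mul_of_nonneg_right (le_max_left _ _) (Real.rpow_nonneg hε.le _)) hIball
  -- term 2 : Hölder
  have hT2 : ∫⁻ x in (ball x₀ (K*ε))ᶜ, ENNReal.ofReal (u x ^ 2) * J x
      ≤ ENNReal.ofReal (max C₁ C₅ * K ^ (-(N:ℝ)) *
          (∫ x in (ball x₀ (K*ε))ᶜ, |u x| ^ critExp N α) ^ (2 / critExp N α)) := by
    have step1 : ∫⁻ x in (ball x₀ (K*ε))ᶜ, ENNReal.ofReal (u x ^ 2) * J x
        ≤ ∫⁻ x in (ball x₀ (K*ε))ᶜ,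
            ((fun x => ENNReal.ofReal (u x ^ 2)) *
             (fun x => ENNReal.ofReal (D * ε ^ ((N:ℝ)) * ‖x - x₀‖ ^ (-s)))) x := by
      refine setLIntegral_mono' measurableSet_ball.compl fun x hx => ?_
      exact mul_le_mul_right (hJ2 x hx) _
    have hgm : Measurable (fun x : EN N => ENNReal.ofReal (D * ε ^ ((N:ℝ)) * ‖x - x₀‖ ^ (-s))) := by
      apply Measurable.ennreal_ofReal
      exact ((continuous_id.sub continuous_const).norm.measurable.pow_const (-s)).const_mul _
    have hold := ENNReal.lintegral_mul_le_Lp_mul_Lq (volume.restrict (ball x₀ (K*ε))ᶜ) hpq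
      (f := fun x => ENNReal.ofReal (u x ^ 2))
      (g := fun x => ENNReal.ofReal (D * ε ^ ((N:ℝ)) * ‖x - x₀‖ ^ (-s)))
      ((ENNReal.measurable_ofReal.comp_aemeasurable (hum.pow_const 2)).restrict)
      hgm.aemeasurable
    -- factor 1
    have hup : ∀ x : EN N, (ENNReal.ofReal (u x ^ 2)) ^ pe = ENNReal.ofReal (|u x| ^ critExp N α) := by
      intro x
      rw [ENNReal.ofReal_rpow_of_nonneg (sq_nonneg _) hpe0.le]
      congr 1
      rw [← sq_abs, ← Real.rpow_natCast |u x| 2, ← Real.rpow_mul (abs_nonneg _)]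
      congr 1
      rw [critExp, hpe_def]
      push_cast
      ring
    have hF1 : (∫⁻ x in (ball x₀ (K*ε))ᶜ, (ENNReal.ofReal (u x ^ 2)) ^ pe) ^ (1/pe)
        = ENNReal.ofReal ((∫ x in (ball x₀ (K*ε))ᶜ, |u x| ^ critExp N α) ^ (2 / critExp N α)) := by
      simp_rw [hup]
      rw [← ofReal_integral_eq_lintegral_ofReal hInt2.integrableOn
        (Filter.Eventually.of_forall fun x => by positivity),
        ENNReal.ofReal_rpow_of_nonneg hIout (by positivity)]
      congr 2
      rw [div_eq_div_iff hpe0.ne' hcrit0.ne', critExp, hpe_def]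
      field_simp
    -- factor 2
    have hg2 : ∀ x : EN N, (ENNReal.ofReal (D * ε ^ ((N:ℝ)) * ‖x - x₀‖ ^ (-s))) ^ qe
        = ENNReal.ofReal ((D * ε ^ ((N:ℝ))) ^ qe) * ENNReal.ofReal (‖x - x₀‖ ^ (-(s*qe))) := by
      intro x
      rw [ENNReal.ofReal_rpow_of_nonneg (by positivity) hqe0.le,
        Real.mul_rpow (by positivity) (Real.rpow_nonneg (norm_nonneg _) _),
        ← Real.rpow_mul (norm_nonneg _), show -s * qe = -(s*qe) from by ring,
        ENNReal.ofReal_mul (by positivity)]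
    have hF2 : (∫⁻ x in (ball x₀ (K*ε))ᶜ, (ENNReal.ofReal (D * ε ^ ((N:ℝ)) * ‖x - x₀‖ ^ (-s))) ^ qe) ^ (1/qe)
        ≤ ENNReal.ofReal (C₅ * K ^ (-(N:ℝ))) := by
      have hb : (∫⁻ x in (ball x₀ (K*ε))ᶜ, (ENNReal.ofReal (D * ε ^ ((N:ℝ)) * ‖x - x₀‖ ^ (-s))) ^ qe)
          ≤ ENNReal.ofReal ((D * ε ^ ((N:ℝ))) ^ qe * (Cf2 * (K*ε) ^ ((N:ℝ) - s*qe))) := by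
        simp_rw [hg2]
        rw [lintegral_const_mul' _ _ ENNReal.ofReal_ne_top]
        calc ENNReal.ofReal ((D * ε ^ ((N:ℝ))) ^ qe) *
              ∫⁻ x in (ball x₀ (K*ε))ᶜ, ENNReal.ofReal (‖x - x₀‖ ^ (-(s*qe)))
            ≤ ENNReal.ofReal ((D * ε ^ ((N:ℝ))) ^ qe) *
              ENNReal.ofReal (Cf2 * (K*ε) ^ ((N:ℝ) - s*qe)) :=
              mul_le_mul_right (hCf2 x₀ (K*ε) hKε) _
          _ = _ := (ENNReal.ofReal_mul (by positivity)).symm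
      refine le_trans (ENNReal.rpow_le_rpow hb (by positivity)) ?_
      rw [ENNReal.ofReal_rpow_of_nonneg (by positivity) (by positivity)]
      refine le_of_eq (congrArg _ ?_)
      have hexp2 : ((N:ℝ) - s*qe) * (1/qe) = -(N:ℝ) := by
        rw [hs_def, hqe_def]
        field_simp
        ring
      rw [Real.mul_rpow (by positivity) (by positivity),
        Real.mul_rpow hCf20.le (by positivity),
        ← Real.rpow_mul (by positivity : (0:ℝ) ≤ D * ε ^ ((N:ℝ))),
        mul_one_div_cancel hqe0.ne', Real.rpow_one,
        ← Real.rpow_mul (by positivity : (0:ℝ) ≤ K*ε), hexp2,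
        Real.mul_rpow hK0.le hε.le, hC₅_def]
      have hee : ε ^ ((N:ℝ)) * ε ^ (-(N:ℝ)) = 1 := by
        rw [← Real.rpow_add hε]
        simp
      calc D * ε ^ ((N:ℝ)) * (Cf2 ^ (1/qe) * (K ^ (-(N:ℝ)) * ε ^ (-(N:ℝ))))
          = D * Cf2 ^ (1/qe) * K ^ (-(N:ℝ)) * (ε ^ ((N:ℝ)) * ε ^ (-(N:ℝ))) := by ring
        _ = D * Cf2 ^ (1/qe) * K ^ (-(N:ℝ)) := by rw [hee, mul_one]
    calc ∫⁻ x in (ball x₀ (K*ε))ᶜ, ENNReal.ofReal (u x ^ 2) * J x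
        ≤ _ := step1
      _ ≤ _ := hold
      _ = ENNReal.ofReal ((∫ x in (ball x₀ (K*ε))ᶜ, |u x| ^ critExp N α) ^ (2 / critExp N α)) *
            (∫⁻ x in (ball x₀ (K*ε))ᶜ,
              (ENNReal.ofReal (D * ε ^ ((N:ℝ)) * ‖x - x₀‖ ^ (-s))) ^ qe) ^ (1/qe) := by
          rw [hF1]
      _ ≤ ENNReal.ofReal ((∫ x in (ball x₀ (K*ε))ᶜ, |u x| ^ critExp N α) ^ (2 / critExp N α)) *
            ENNReal.ofReal (C₅ * K ^ (-(N:ℝ))) := mul_le_mul_right hF2 _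
      _ ≤ ENNReal.ofReal (max C₁ C₅ * K ^ (-(N:ℝ)) *
            (∫ x in (ball x₀ (K*ε))ᶜ, |u x| ^ critExp N α) ^ (2 / critExp N α)) := by
          rw [← ENNReal.ofReal_mul (by positivity)]
          refine ENNReal.ofReal_le_ofReal ?_
          have h1 : C₅ * K ^ (-(N:ℝ)) ≤ max C₁ C₅ * K ^ (-(N:ℝ)) :=
            mul_le_mul_of_nonneg_right (le_max_right _ _) (Real.rpow_nonneg hK0.le _)
          calc (∫ x in (ball x₀ (K*ε))ᶜ, |u x| ^ critExp N α) ^ (2 / critExp N α) *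
                (C₅ * K ^ (-(N:ℝ)))
              ≤ (∫ x in (ball x₀ (K*ε))ᶜ, |u x| ^ critExp N α) ^ (2 / critExp N α) *
                (max C₁ C₅ * K ^ (-(N:ℝ))) :=
                mul_le_mul_of_nonneg_left h1 (by positivity)
            _ = _ := by ring
  -- conclusion
  simp only [hcut]
  calc (∫⁻ p : EN N × EN N,
        ENNReal.ofReal ((u p.1) ^ 2 * (ψ p.1 - ψ p.2) ^ 2 / ‖p.1 - p.2‖ ^ s))
      = ∫⁻ x, ENNReal.ofReal (u x ^ 2) * J x := main_eq
    _ = (∫⁻ x in ball x₀ (K*ε), ENNReal.ofReal (u x ^ 2) * J x)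
        + ∫⁻ x in (ball x₀ (K*ε))ᶜ, ENNReal.ofReal (u x ^ 2) * J x :=
        (lintegral_add_compl _ measurableSet_ball).symm
    _ ≤ _ := add_le_add hT1 hT2
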